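/- arXiv:1812.11781 — 4 statements merged into one kernel-verified Lean document; each statement's English description precedes it below -/
import Mathlib

section
/- Let (X, μ) be an atomless σ-finite non-zero measure space and N a Young–Orlicz function. Then Y(N) := sup{ ‖f‖_{sL(N)} / ‖f‖_{wL(N)} : f ∈ wL(N), f ≠ 0 } is finite if and only if there exists a constant C ∈ (0, ∞) such that the Lebesgue–Stieltjes integral ∫₀^∞ N(C t) |dV[N](t)| is finite (equivalently, J(N) := inf_{C>0} ∫₀^∞ N(C t) |dV[N](t)| < ∞). -/
open MeasureTheory ENNReal Set Filter Topology

/-- A Young–Orlicz function: even, continuous, convex, non-negative, strictly increasing to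
infinity on `[0, ∞)`, with `N u / u → 0` as `u → 0⁺` and `N u / u → ∞` as `u → ∞`. -/
structure IsYoungOrlicz (N : ℝ → ℝ) : Prop where
  even : ∀ u, N (-u) = N u
  continuous : Continuous N
  convexOn : ConvexOn ℝ Set.univ N
  nonneg : ∀ u, 0 ≤ N u
  strictMonoOn : StrictMonoOn N (Set.Ici 0)
  tendsto_atTop : Filter.Tendsto N Filter.atTop Filter.atTop
  tendsto_div_zero : Filter.Tendsto (fun u => N u / u) (nhdsWithin 0 (Set.Ioi 0)) (nhds 0)
  tendsto_div_atTop : Filter.Tendsto (fun u => N u / u) Filter.atTop Filter.atTop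

/-- A measure is atomless if every set of positive measure has a measurable subset of strictly
smaller positive measure. -/
def Atomless {X : Type*} [MeasurableSpace X] (μ : MeasureTheory.Measure X) : Prop :=
  ∀ s : Set X, MeasurableSet s → 0 < μ s →
    ∃ t : Set X, MeasurableSet t ∧ t ⊆ s ∧ 0 < μ t ∧ μ t < μ s

/-- The tail function `T[f](t) = μ {x : |f x| ≥ t}`. -/
noncomputable def tailFun {X : Type*} [MeasurableSpace X] (μ : MeasureTheory.Measure X)
    (f : X → ℝ) (t : ℝ) : ℝ≥0∞ :=
  μ {x | t ≤ |f x|}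

/-- `V[N](t) = min (μ X) (1 / N t)` (computed in `ℝ≥0∞`, so `1/0 = ∞`). -/
noncomputable def Vfun {X : Type*} [MeasurableSpace X] (μ : MeasureTheory.Measure X)
    (N : ℝ → ℝ) (t : ℝ) : ℝ≥0∞ :=
  min (μ Set.univ) (ENNReal.ofReal (N t))⁻¹

/-- The strong (Luxemburg) Orlicz norm, with value `∞` when `f ∉ sL(N)`. -/
noncomputable def strongNorm {X : Type*} [MeasurableSpace X] (μ : MeasureTheory.Measure X)
    (N : ℝ → ℝ) (f : X → ℝ) : ℝ≥0∞ :=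
  sInf (ENNReal.ofReal ''
    {k : ℝ | 0 < k ∧ ∫⁻ x, ENNReal.ofReal (N (|f x| / k)) ∂μ ≤ 1})

/-- The weak Orlicz (tail) norm `‖f‖_{wL(N)} = inf {K > 0 : ∀ t > 0, T[f](t) ≤ V[N](t/K)}`,
with value `∞` when `f ∉ wL(N)`. -/
noncomputable def weakNorm {X : Type*} [MeasurableSpace X] (μ : MeasureTheory.Measure X)
    (N : ℝ → ℝ) (f : X → ℝ) : ℝ≥0∞ :=
  sInf (ENNReal.ofReal ''
    {K : ℝ | 0 < K ∧ ∀ t > 0, tailFun μ f t ≤ Vfun μ N (t / K)})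

/-- `Y(N) = sup { ‖f‖_{sL(N)} / ‖f‖_{wL(N)} : f ∈ wL(N), f ≠ 0 }`. -/
noncomputable def Ynorm {X : Type*} [MeasurableSpace X] (μ : MeasureTheory.Measure X)
    (N : ℝ → ℝ) : ℝ≥0∞ :=
  ⨆ (f : X → ℝ) (_ : Measurable f) (_ : ¬ f =ᵐ[μ] (0 : X → ℝ))
    (_ : weakNorm μ N f ≠ ⊤), strongNorm μ N f / weakNorm μ N f

/-- The (generalized) inverse of a Young–Orlicz function on `[0, ∞)`. -/
noncomputable def Ninv (N : ℝ → ℝ) (w : ℝ) : ℝ :=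
  sInf {u : ℝ | 0 ≤ u ∧ w ≤ N u}

/-- `Q[N](k) = ∫_{y₀}^∞ N(y/k) |d(1/N(y))| = ∫_{1/μ(X)}^∞ N(N⁻¹(w)/k) w⁻² dw`. -/
noncomputable def Qfun {X : Type*} [MeasurableSpace X] (μ : MeasureTheory.Measure X)
    (N : ℝ → ℝ) (k : ℝ) : ℝ≥0∞ :=
  ∫⁻ w in Set.Ioi ((μ Set.univ)⁻¹.toReal), ENNReal.ofReal (N (Ninv N w / k) / w ^ 2)

/-- `G(α) = ∫₀^{1/2} (1 - z)⁻² z^{-α} dz`. -/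
noncomputable def Gfun (α : ℝ) : ℝ≥0∞ :=
  ∫⁻ z in Set.Ioo (0 : ℝ) (1/2), ENNReal.ofReal ((1 - z) ^ (-(2:ℝ)) * z ^ (-α))

/-!
Both directions rest on the layer-cake formula, which turns `∫ N(|f|/k) dμ` into
`∫₀^∞ T[f](k N⁻¹(s)) ds` and `∫₀^∞ N(C t) dν(t)` into `∫₀^∞ ν[N⁻¹(s)/C, ∞) ds`, so that a tail bound
`T[f] ≤ V[N](·/K)` integrates to a bound on the Orlicz modular.

If `∫ N(C t) dν ≤ 1` (finiteness suffices: by convexity, shrinking `C` scales the integral down),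
every `f` with `‖f‖_{wL(N)} ≤ K` has `‖f‖_{sL(N)} ≤ K / C`, so `Y(N) ≤ 1 / C`.

Conversely, on an atomless σ-finite space Sierpiński's theorem yields a decreasing family `A m`,
`m ∈ ℤ`, with `μ (A m) = V[N](2^m)`, and `f = sup {2^m : x ∈ A m}` satisfies
`V[N](2t) ≤ T[f](t) ≤ V[N](t)`. So `‖f‖_{wL(N)} ≤ 1`, while `∫ N(|f|/k) dμ ≥ ∫ N(t/(4k)) dν = ∞`
for every `k` when no such `C` exists, i.e. `‖f‖_{sL(N)} = ∞`.
-/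

namespace IsYoungOrlicz

variable {N : ℝ → ℝ}

theorem map_zero (hN : IsYoungOrlicz N) : N 0 = 0 := by
  have hid : Tendsto (fun u : ℝ => u) (𝓝[>] 0) (𝓝 0) :=
    tendsto_nhdsWithin_of_tendsto_nhds tendsto_id
  have hlim : Tendsto N (𝓝[>] 0) (𝓝 0) := by
    refine ((hN.tendsto_div_zero.mul hid).congr' ?_).trans (by rw [mul_zero])
    filter_upwards [self_mem_nhdsWithin] with u hu using div_mul_cancel₀ _ (ne_of_gt hu)
  exact tendsto_nhds_unique (hN.continuous.continuousWithinAt.tendsto) hlim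

theorem pos (hN : IsYoungOrlicz N) {u : ℝ} (hu : 0 < u) : 0 < N u :=
  hN.map_zero ▸ hN.strictMonoOn self_mem_Ici hu.le hu

theorem map_mul_le (hN : IsYoungOrlicz N) {θ : ℝ} (hθ0 : 0 ≤ θ) (hθ1 : θ ≤ 1) (u : ℝ) :
    N (θ * u) ≤ θ * N u := by
  have h := hN.convexOn.2 (mem_univ u) (mem_univ 0) hθ0 (sub_nonneg.2 hθ1) (by ring)
  simpa [hN.map_zero] using h

theorem Ninv_mem (hN : IsYoungOrlicz N) (w : ℝ) : Ninv N w ∈ {u : ℝ | 0 ≤ u ∧ w ≤ N u} := by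
  have hne : {u : ℝ | 0 ≤ u ∧ w ≤ N u}.Nonempty :=
    ((eventually_ge_atTop 0).and (hN.tendsto_atTop.eventually_ge_atTop w)).exists
  have hclosed : IsClosed {u : ℝ | 0 ≤ u ∧ w ≤ N u} :=
    isClosed_Ici.inter (isClosed_Ici.preimage hN.continuous)
  exact hclosed.csInf_mem hne ⟨0, fun _ hu => hu.1⟩

theorem le_iff_Ninv_le (hN : IsYoungOrlicz N) {w u : ℝ} (hu : 0 ≤ u) :
    w ≤ N u ↔ Ninv N w ≤ u := by
  refine ⟨fun h => csInf_le ⟨0, fun _ hv => hv.1⟩ ⟨hu, h⟩, fun h => ?_⟩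
  obtain ⟨h0, hw⟩ := hN.Ninv_mem w
  exact hw.trans (hN.strictMonoOn.monotoneOn h0 hu h)

theorem Ninv_pos (hN : IsYoungOrlicz N) {w : ℝ} (hw : 0 < w) : 0 < Ninv N w := by
  obtain ⟨h0, hw'⟩ := hN.Ninv_mem w
  refine h0.lt_of_ne fun h => ?_
  rw [← h, hN.map_zero] at hw'
  exact hw'.not_gt hw

end IsYoungOrlicz

section Vfun

variable {X : Type*} [MeasurableSpace X] {μ : Measure X} {N : ℝ → ℝ}

theorem Vfun_le_Vfun (hN : IsYoungOrlicz N) {a b : ℝ} (ha : 0 ≤ a) (hab : a ≤ b) :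
    Vfun μ N b ≤ Vfun μ N a :=
  min_le_min le_rfl <| ENNReal.inv_le_inv.2 <|
    ofReal_le_ofReal (hN.strictMonoOn.monotoneOn ha (ha.trans hab) hab)

theorem Vfun_ne_top (hN : IsYoungOrlicz N) {t : ℝ} (ht : 0 < t) : Vfun μ N t ≠ ⊤ :=
  ne_top_of_le_ne_top (by simpa using hN.pos ht) (min_le_right _ _)

theorem Vfun_pos (hμ : μ ≠ 0) (t : ℝ) : 0 < Vfun μ N t :=
  lt_min (Measure.measure_univ_pos.2 hμ) (ENNReal.inv_pos.2 ofReal_ne_top)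

theorem tendsto_Vfun_atTop (hN : IsYoungOrlicz N) : Tendsto (Vfun μ N) atTop (𝓝 0) := by
  have h : Tendsto (fun t => (ENNReal.ofReal (N t))⁻¹) atTop (𝓝 0) :=
    ENNReal.inv_top ▸ tendsto_inv_iff.2 (ENNReal.tendsto_ofReal_atTop.comp hN.tendsto_atTop)
  exact tendsto_of_tendsto_of_tendsto_of_le_of_le tendsto_const_nhds h (fun _ => zero_le)
    (fun _ => min_le_right _ _)

end Vfun

section LayerCake

variable {X : Type*} [MeasurableSpace X] {μ : Measure X} {N : ℝ → ℝ}

theorem lintegral_N_abs_div_eq (hN : IsYoungOrlicz N) {f : X → ℝ} (hf : Measurable f) {k : ℝ}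
    (hk : 0 < k) :
    ∫⁻ x, ENNReal.ofReal (N (|f x| / k)) ∂μ = ∫⁻ s in Ioi 0, tailFun μ f (k * Ninv N s) := by
  rw [lintegral_eq_lintegral_meas_le μ (ae_of_all μ fun x => hN.nonneg _)
    (hN.continuous.measurable.comp (hf.abs.div_const k)).aemeasurable]
  refine lintegral_congr fun s => congrArg μ (Set.ext fun x => ?_)
  rw [mem_ofPred_eq, mem_ofPred_eq, hN.le_iff_Ninv_le (by positivity), le_div_iff₀ hk, mul_comm]

theorem setLIntegral_N_mul_eq (hN : IsYoungOrlicz N) (ν : Measure ℝ) {C : ℝ} (hC : 0 < C) :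
    ∫⁻ t in Ioi 0, ENNReal.ofReal (N (C * t)) ∂ν = ∫⁻ s in Ioi 0, ν (Ici (Ninv N s / C)) := by
  have hm : Measurable fun t : ℝ => N (C * t) :=
    hN.continuous.measurable.comp (measurable_const_mul C)
  rw [lintegral_eq_lintegral_meas_le _ (ae_of_all _ fun t => hN.nonneg _) hm.aemeasurable]
  refine setLIntegral_congr_fun measurableSet_Ioi fun s (hs : 0 < s) => ?_
  rw [Measure.restrict_apply (measurableSet_le measurable_const hm)]
  congr 1
  ext t
  have hpos : 0 < Ninv N s / C := div_pos (hN.Ninv_pos hs) hC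
  simp only [mem_inter_iff, mem_ofPred_eq, mem_Ioi, mem_Ici, div_le_iff₀ hC]
  constructor
  · rintro ⟨hst, ht⟩
    rwa [hN.le_iff_Ninv_le (by positivity), mul_comm] at hst
  · intro ht
    have ht0 : 0 < t := hpos.trans_le ((div_le_iff₀ hC).2 ht)
    exact ⟨(hN.le_iff_Ninv_le (by positivity)).2 (by rwa [mul_comm]), ht0⟩

end LayerCake

section UpperBound

variable {X : Type*} [MeasurableSpace X] {μ : Measure X} {N : ℝ → ℝ} {f : X → ℝ}

theorem strongNorm_le_ofReal {k : ℝ} (hk : 0 < k)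
    (h : ∫⁻ x, ENNReal.ofReal (N (|f x| / k)) ∂μ ≤ 1) : strongNorm μ N f ≤ ENNReal.ofReal k :=
  sInf_le ⟨k, ⟨hk, h⟩, rfl⟩

theorem weakNorm_le_ofReal {K : ℝ} (hK : 0 < K)
    (h : ∀ t > 0, tailFun μ f t ≤ Vfun μ N (t / K)) : weakNorm μ N f ≤ ENNReal.ofReal K :=
  sInf_le ⟨K, ⟨hK, h⟩, rfl⟩

variable {ν : Measure ℝ} {C : ℝ}

theorem strongNorm_le_of_tailFun_le (hN : IsYoungOrlicz N)
    (hν : ∀ t : ℝ, 0 < t → ν (Ioi t) = Vfun μ N t) (hC : 0 < C)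
    (hνC : ∫⁻ t in Ioi 0, ENNReal.ofReal (N (C * t)) ∂ν ≤ 1) (hf : Measurable f) {K : ℝ}
    (hK : 0 < K) (htail : ∀ t > 0, tailFun μ f t ≤ Vfun μ N (t / K)) :
    strongNorm μ N f ≤ ENNReal.ofReal (K / C) := by
  refine strongNorm_le_ofReal (by positivity) ?_
  rw [lintegral_N_abs_div_eq hN hf (by positivity)]
  refine le_trans (setLIntegral_mono' measurableSet_Ioi fun s (hs : 0 < s) => ?_)
    ((setLIntegral_N_mul_eq hN ν hC).symm.trans_le hνC)
  have hpos : 0 < Ninv N s / C := div_pos (hN.Ninv_pos hs) hC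
  calc tailFun μ f (K / C * Ninv N s) ≤ Vfun μ N (K / C * Ninv N s / K) :=
        htail _ (mul_pos (div_pos hK hC) (hN.Ninv_pos hs))
    _ = ν (Ioi (Ninv N s / C)) := by rw [hν _ hpos]; congr 1; field_simp
    _ ≤ ν (Ici (Ninv N s / C)) := measure_mono Ioi_subset_Ici_self

theorem strongNorm_le_mul_weakNorm (hN : IsYoungOrlicz N)
    (hν : ∀ t : ℝ, 0 < t → ν (Ioi t) = Vfun μ N t) (hC : 0 < C)
    (hνC : ∫⁻ t in Ioi 0, ENNReal.ofReal (N (C * t)) ∂ν ≤ 1) (hf : Measurable f) :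
    strongNorm μ N f ≤ ENNReal.ofReal C⁻¹ * weakNorm μ N f := by
  have h0 : ENNReal.ofReal C⁻¹ ≠ 0 := (ofReal_pos.2 (inv_pos.2 hC)).ne'
  rw [weakNorm, sInf_image, ENNReal.mul_iInf_of_ne h0 ofReal_ne_top]
  refine le_iInf fun K => ?_
  rw [ENNReal.mul_iInf_of_ne h0 ofReal_ne_top]
  refine le_iInf fun ⟨hK, htail⟩ => ?_
  rw [← ofReal_mul (inv_nonneg.2 hC.le), inv_mul_eq_div]
  exact strongNorm_le_of_tailFun_le hN hν hC hνC hf hK htail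

theorem Ynorm_le_of_lintegral_le_one (hN : IsYoungOrlicz N)
    (hν : ∀ t : ℝ, 0 < t → ν (Ioi t) = Vfun μ N t) (hC : 0 < C)
    (hνC : ∫⁻ t in Ioi 0, ENNReal.ofReal (N (C * t)) ∂ν ≤ 1) :
    Ynorm μ N ≤ ENNReal.ofReal C⁻¹ :=
  iSup₂_le fun _ hf => iSup₂_le fun _ _ =>
    ENNReal.div_le_of_le_mul (strongNorm_le_mul_weakNorm hN hν hC hνC hf)

theorem exists_lintegral_le_one (hN : IsYoungOrlicz N) (hC : 0 < C)
    (hνC : ∫⁻ t in Ioi 0, ENNReal.ofReal (N (C * t)) ∂ν < ⊤) :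
    ∃ C' : ℝ, 0 < C' ∧ ∫⁻ t in Ioi 0, ENNReal.ofReal (N (C' * t)) ∂ν ≤ 1 := by
  set I := ∫⁻ t in Ioi 0, ENNReal.ofReal (N (C * t)) ∂ν
  set θ := (I.toReal + 1)⁻¹
  have hθ0 : 0 < θ := by positivity
  have hθ1 : θ ≤ 1 := inv_le_one_of_one_le₀ (by linarith [I.toReal_nonneg])
  refine ⟨θ * C, by positivity, ?_⟩
  calc ∫⁻ t in Ioi 0, ENNReal.ofReal (N (θ * C * t)) ∂ν
      ≤ ∫⁻ t in Ioi 0, ENNReal.ofReal θ * ENNReal.ofReal (N (C * t)) ∂ν := by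
        refine lintegral_mono fun t => ?_
        rw [← ofReal_mul hθ0.le, mul_assoc]
        exact ofReal_le_ofReal (hN.map_mul_le hθ0.le hθ1 _)
    _ = ENNReal.ofReal (θ * I.toReal) := by
        rw [lintegral_const_mul' _ _ ofReal_ne_top, ofReal_mul hθ0.le, ofReal_toReal hνC.ne]
    _ ≤ 1 := ENNReal.ofReal_le_one.2 <| by
        rw [inv_mul_le_iff₀ (by positivity)]; linarith

end UpperBound

namespace Atomless

variable {X : Type*} [MeasurableSpace X] {μ : Measure X}

theorem exists_subset_measure_pos_le_half (hat : Atomless μ) {s : Set X} (hs : MeasurableSet s)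
    (h0 : 0 < μ s) (hfin : μ s ≠ ⊤) :
    ∃ t ⊆ s, MeasurableSet t ∧ 0 < μ t ∧ μ t ≤ μ s / 2 := by
  obtain ⟨u, hu, hus, hu0, hult⟩ := hat s hs h0
  by_cases hhalf : μ u ≤ μ s / 2
  · exact ⟨u, hus, hu, hu0, hhalf⟩
  refine ⟨s \ u, sdiff_subset, hs.diff hu, ?_, ?_⟩ <;>
    rw [measure_sdiff hus hu.nullMeasurableSet (ne_top_of_lt hult)]
  · exact tsub_pos_of_lt hult
  · calc μ s - μ u ≤ μ s - μ s / 2 := tsub_le_tsub_left (not_le.1 hhalf).le _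
      _ = μ s / 2 := ENNReal.sub_half hfin

theorem exists_subset_measure_pos_le [SigmaFinite μ] (hat : Atomless μ) {s : Set X}
    (hs : MeasurableSet s) (h0 : 0 < μ s) {ε : ℝ≥0∞} (hε : 0 < ε) :
    ∃ t ⊆ s, MeasurableSet t ∧ 0 < μ t ∧ μ t ≤ ε := by
  obtain ⟨s', hs', hs's, hs'0, hs'fin⟩ := Measure.exists_subset_measure_lt_top hs h0
  have halving : ∀ n : ℕ, ∃ t ⊆ s', MeasurableSet t ∧ 0 < μ t ∧ μ t ≤ 2⁻¹ ^ n * μ s' := by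
    intro n
    induction n with
    | zero => exact ⟨s', subset_rfl, hs', hs'0, by simp⟩
    | succ n ih =>
      obtain ⟨t, hts, ht, ht0, htle⟩ := ih
      obtain ⟨t', ht't, ht', ht'0, ht'le⟩ :=
        hat.exists_subset_measure_pos_le_half ht ht0
          (ne_top_of_le_ne_top hs'fin.ne (measure_mono hts))
      refine ⟨t', ht't.trans hts, ht', ht'0, ht'le.trans ?_⟩
      rw [pow_succ, mul_comm _ 2⁻¹, mul_assoc, ENNReal.div_eq_inv_mul]
      gcongr
  obtain ⟨n, hn⟩ := ENNReal.exists_inv_two_pow_lt (ENNReal.div_pos hε.ne' hs'fin.ne).ne'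
  obtain ⟨t, hts, ht, ht0, htle⟩ := halving n
  exact ⟨t, hts.trans hs's, ht, ht0, htle.trans (ENNReal.mul_le_of_le_div hn.le)⟩

/-- One step of the greedy exhaustion in Sierpiński's theorem. -/
theorem exists_greedy_step {u t : Set X} (ht : MeasurableSet t) (htu : t ⊆ u) {c : ℝ≥0∞}
    (htc : μ t ≤ c) (hc : c ≠ ⊤) :
    ∃ t', MeasurableSet t' ∧ t ⊆ t' ∧ t' ⊆ u ∧ μ t' ≤ c ∧
      ∀ w, MeasurableSet w → w ⊆ u \ t → μ w ≤ c - μ t → μ w ≤ 2 * (μ t' - μ t) := by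
  set P : Set (Set X) := {w | MeasurableSet w ∧ w ⊆ u \ t ∧ μ w ≤ c - μ t}
  set δ := ⨆ w ∈ P, μ w
  obtain ⟨w, ⟨hw, hwu, hwc⟩, hδw⟩ : ∃ w ∈ P, δ ≤ 2 * μ w := by
    rcases eq_or_ne δ 0 with hδ | hδ
    · exact ⟨∅, ⟨.empty, empty_subset _, by simp⟩, by simp [hδ]⟩
    have hδtop : δ ≠ ⊤ := ne_top_of_le_ne_top (ne_top_of_le_ne_top hc tsub_le_self)
      (iSup₂_le fun w hw => hw.2.2)
    obtain ⟨w, hw, hlt⟩ := lt_biSup_iff.1 (ENNReal.half_lt_self hδ hδtop)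
    refine ⟨w, hw, ?_⟩
    rw [mul_comm, ← ENNReal.div_le_iff_le_mul (by simp) (by simp)]
    exact hlt.le
  have hdisj : Disjoint t w := disjoint_left.2 fun x hxt hxw => (hwu hxw).2 hxt
  have hμ : μ (t ∪ w) = μ t + μ w := measure_union hdisj hw
  refine ⟨t ∪ w, ht.union hw, subset_union_left, union_subset htu (hwu.trans sdiff_subset), ?_,
    fun w' hw' hw'u hw'c => ?_⟩
  · rw [hμ]
    exact (add_le_add_right hwc _).trans (add_tsub_cancel_of_le htc).le
  · rw [hμ, ENNReal.add_sub_cancel_left (ne_top_of_le_ne_top hc htc)]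
    exact (le_biSup (fun w => μ w) (show w' ∈ P from ⟨hw', hw'u, hw'c⟩)).trans hδw

/-- Sierpiński's theorem. -/
theorem exists_measure_eq_of_subset [SigmaFinite μ] (hat : Atomless μ) {s u : Set X}
    (hs : MeasurableSet s) (hu : MeasurableSet u) (hsu : s ⊆ u) {c : ℝ≥0∞} (hsc : μ s ≤ c)
    (hcu : c ≤ μ u) (hc : c ≠ ⊤) : ∃ t, MeasurableSet t ∧ s ⊆ t ∧ t ⊆ u ∧ μ t = c := by
  choose! next hnext hsub hnextu hnextc hgreedy using
    fun t (ht : MeasurableSet t) (htu : t ⊆ u) (htc : μ t ≤ c) => exists_greedy_step ht htu htc hc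
  set F : ℕ → Set X := fun n => next^[n] s
  have hF_succ (n : ℕ) : F (n + 1) = next (F n) := Function.iterate_succ_apply' _ _ _
  have hF (n : ℕ) : MeasurableSet (F n) ∧ F n ⊆ u ∧ μ (F n) ≤ c := by
    induction n with
    | zero => exact ⟨hs, hsu, hsc⟩
    | succ n ih =>
      rw [hF_succ]
      exact ⟨hnext _ ih.1 ih.2.1 ih.2.2, hnextu _ ih.1 ih.2.1 ih.2.2, hnextc _ ih.1 ih.2.1 ih.2.2⟩
  have hF_mono : Monotone F := monotone_nat_of_le_succ fun n => by
    rw [hF_succ]; exact hsub _ (hF n).1 (hF n).2.1 (hF n).2.2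
  set T := ⋃ n, F n
  have hTc : μ T ≤ c := by
    rw [hF_mono.measure_iUnion]; exact iSup_le fun n => (hF n).2.2
  refine ⟨T, .iUnion fun n => (hF n).1, subset_iUnion F 0, iUnion_subset fun n => (hF n).2.1,
    hTc.antisymm (not_lt.1 fun hTlt => ?_)⟩
  -- A small set outside `T` would be an admissible increment at every step of the exhaustion.
  have hpos : 0 < μ (u \ T) :=
    (tsub_pos_of_lt (hTlt.trans_le hcu)).trans_le le_measure_sdiff
  obtain ⟨w, hwuT, hw, hw0, hwc⟩ :=
    hat.exists_subset_measure_pos_le (hu.diff (.iUnion fun n => (hF n).1)) hpos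
      (tsub_pos_of_lt hTlt)
  have hstep (n : ℕ) : μ w ≤ 2 * (μ (F (n + 1)) - μ (F n)) := by
    rw [hF_succ]
    refine hgreedy _ (hF n).1 (hF n).2.1 (hF n).2.2 w hw
      (hwuT.trans (sdiff_subset_sdiff_right (subset_iUnion F n)))
      (hwc.trans (tsub_le_tsub_left (measure_mono (subset_iUnion F n)) c))
  have hlin (n : ℕ) : n * μ w ≤ 2 * μ (F n) := by
    induction n with
    | zero => simp
    | succ n ih =>
      calc ((n + 1 : ℕ) : ℝ≥0∞) * μ w = n * μ w + μ w := by push_cast; ring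
        _ ≤ 2 * μ (F n) + 2 * (μ (F (n + 1)) - μ (F n)) := add_le_add ih (hstep n)
        _ = 2 * μ (F (n + 1)) := by
          rw [← mul_add, add_tsub_cancel_of_le (measure_mono (hF_mono n.le_succ))]
  obtain ⟨n, hn⟩ :=
    ENNReal.exists_nat_mul_gt hw0.ne' (ENNReal.mul_ne_top (ENNReal.ofNat_ne_top (n := 2)) hc)
  exact (hlin n).not_gt (hn.trans_le' (by gcongr; exact (hF n).2.2))

theorem exists_monotone_measure_eq [SigmaFinite μ] (hat : Atomless μ) {u : Set X}
    (hu : MeasurableSet u) {c : ℕ → ℝ≥0∞} (hc : Monotone c) (hcu : ∀ n, c n ≤ μ u)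
    (hc_top : ∀ n, c n ≠ ⊤) {s : Set X} (hs : MeasurableSet s) (hsu : s ⊆ u) (hsc : μ s = c 0) :
    ∃ D : ℕ → Set X, Monotone D ∧ D 0 = s ∧ ∀ n, MeasurableSet (D n) ∧ D n ⊆ u ∧ μ (D n) = c n := by
  choose! next hnext hsub hnextu hnextc using
    fun n t (ht : MeasurableSet t) (htu : t ⊆ u) (htc : μ t = c n) =>
      hat.exists_measure_eq_of_subset ht hu htu (htc.trans_le (hc n.le_succ)) (hcu (n + 1))
        (hc_top (n + 1))
  set D : ℕ → Set X := fun n => Nat.rec (motive := fun _ => Set X) s next n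
  have hD (n : ℕ) : MeasurableSet (D n) ∧ D n ⊆ u ∧ μ (D n) = c n := by
    induction n with
    | zero => exact ⟨hs, hsu, hsc⟩
    | succ n ih => exact ⟨hnext n _ ih.1 ih.2.1 ih.2.2, hnextu n _ ih.1 ih.2.1 ih.2.2,
        hnextc n _ ih.1 ih.2.1 ih.2.2⟩
  exact ⟨D, monotone_nat_of_le_succ fun n => hsub n _ (hD n).1 (hD n).2.1 (hD n).2.2, rfl, hD⟩

/-- Glue an increasing chain (for `m ≤ 0`) and the complements of an increasing chain inside its
first set (for `m ≥ 0`). -/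
theorem exists_antitone_measure_eq [SigmaFinite μ] (hat : Atomless μ) {c : ℤ → ℝ≥0∞}
    (hc : Antitone c) (hcμ : ∀ m, c m ≤ μ univ) (hc_top : ∀ m, c m ≠ ⊤) :
    ∃ A : ℤ → Set X, Antitone A ∧ ∀ m, MeasurableSet (A m) ∧ μ (A m) = c m := by
  obtain ⟨A₀, hA₀, -, -, hA₀c⟩ := hat.exists_measure_eq_of_subset .empty .univ (empty_subset _)
    (by simp) (hcμ 0) (hc_top 0)
  obtain ⟨D, hD_mono, hD₀, hD⟩ := hat.exists_monotone_measure_eq (c := fun n => c (-n)) .univ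
    (fun _ _ h => hc (by omega)) (fun _ => hcμ _) (fun _ => hc_top _) hA₀ (subset_univ _) hA₀c
  obtain ⟨E, hE_mono, hE₀, hE⟩ := hat.exists_monotone_measure_eq (c := fun n => c 0 - c n) hA₀
    (fun _ _ h => tsub_le_tsub_left (hc (by omega)) _) (fun _ => hA₀c ▸ tsub_le_self)
    (fun _ => ne_top_of_le_ne_top (hc_top 0) tsub_le_self) .empty (empty_subset _) (by simp)
  refine ⟨fun m => D (-m).toNat \ E m.toNat,
    fun m m' h => sdiff_subset_sdiff (hD_mono (by omega)) (hE_mono (by omega)),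
    fun m => ⟨(hD _).1.diff (hE _).1, ?_⟩⟩
  change μ (D (-m).toNat \ E m.toNat) = c m
  rcases le_or_gt 0 m with hm | hm
  · have h0 : (-m).toNat = 0 := by omega
    rw [h0, hD₀, measure_sdiff (hE _).2.1 (hE _).1.nullMeasurableSet
      (ne_top_of_le_ne_top (hc_top 0) ((hE _).2.2.trans_le tsub_le_self)), (hE _).2.2, hA₀c,
      ENNReal.sub_sub_cancel (hc_top 0) (hc (by omega)), Int.toNat_of_nonneg hm]
  · have h0 : m.toNat = 0 := by omega
    rw [h0, hE₀, sdiff_empty, (hD _).2.2]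
    congr 1
    omega

end Atomless

section Dyadic

variable {X : Type*} [MeasurableSpace X] {μ : Measure X} {N : ℝ → ℝ}

/-- The witness is `x ↦ sup {2 ^ m : x ∈ A m}`, whose tail is `μ (A (n + 1))` on
`(2 ^ n, 2 ^ (n + 1)]`; on the null set `⋂ m, A m` it takes the junk value `⊤.toReal = 0`. -/
theorem exists_tailFun_eq_of_antitone {A : ℤ → Set X} (hA : Antitone A)
    (hAm : ∀ m, MeasurableSet (A m)) (hI : μ (⋂ m, A m) = 0) :
    ∃ f : X → ℝ, Measurable f ∧ ∀ (n : ℤ) (t : ℝ), 2 ^ n < t → t ≤ 2 ^ (n + 1) →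
      tailFun μ f t = μ (A (n + 1)) := by
  set F : X → ℝ≥0∞ := fun x => ⨆ m : ℤ, (A m).indicator (fun _ => ENNReal.ofReal (2 ^ m)) x
  refine ⟨fun x => (F x).toReal,
    (Measurable.iSup fun m => measurable_const.indicator (hAm m)).ennreal_toReal,
    fun n t hnt htn => ?_⟩
  have hsub : {x | t ≤ |(F x).toReal|} ⊆ A (n + 1) := by
    intro x (hx : t ≤ |(F x).toReal|)
    rw [abs_of_nonneg toReal_nonneg] at hx
    have hFx : ENNReal.ofReal (2 ^ n) < F x := by
      refine (ofReal_lt_ofReal_iff_of_nonneg (by positivity)).2 hnt |>.trans_le ?_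
      exact ofReal_le_of_le_toReal hx
    obtain ⟨m, hm⟩ := lt_iSup_iff.1 hFx
    have hxm : x ∈ A m := by
      by_contra h
      rw [indicator_of_notMem h] at hm
      exact ENNReal.not_lt_zero hm
    rw [indicator_of_mem hxm, ofReal_lt_ofReal_iff (by positivity),
      zpow_lt_zpow_iff_right₀ (one_lt_two : (1 : ℝ) < 2)] at hm
    exact hA (Int.add_one_le_of_lt hm) hxm
  have hsup : A (n + 1) \ ⋂ m, A m ⊆ {x | t ≤ |(F x).toReal|} := by
    rintro x ⟨hx, hxI⟩
    obtain ⟨m₁, hm₁⟩ : ∃ m₁, x ∉ A m₁ := by simpa using hxI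
    have hF_le : F x ≤ ENNReal.ofReal (2 ^ m₁) := iSup_le fun m => by
      by_cases hxm : x ∈ A m
      · rw [indicator_of_mem hxm]
        refine ofReal_le_ofReal (zpow_le_zpow_right₀ one_le_two ?_)
        by_contra! h
        exact hm₁ (hA h.le hxm)
      · simp [indicator_of_notMem hxm]
    have hF_ge : ENNReal.ofReal (2 ^ (n + 1)) ≤ F x :=
      le_iSup_of_le (n + 1) (by rw [indicator_of_mem hx])
    show t ≤ |(F x).toReal|
    rw [abs_of_nonneg toReal_nonneg]
    exact htn.trans ((ofReal_le_iff_le_toReal (ne_top_of_le_ne_top ofReal_ne_top hF_le)).1 hF_ge)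
  refine le_antisymm (measure_mono hsub) ?_
  calc μ (A (n + 1)) = μ (A (n + 1) \ ⋂ m, A m) := (measure_sdiff_null hI).symm
    _ ≤ tailFun μ (fun x => (F x).toReal) t := measure_mono hsup

theorem exists_tailFun_between [SigmaFinite μ] (hat : Atomless μ) (hN : IsYoungOrlicz N) :
    ∃ f : X → ℝ, Measurable f ∧ (∀ t > 0, tailFun μ f t ≤ Vfun μ N t) ∧
      (∀ t > 0, Vfun μ N (2 * t) ≤ tailFun μ f t) := by
  obtain ⟨A, hA, hAμ⟩ := hat.exists_antitone_measure_eq (c := fun m : ℤ => Vfun μ N (2 ^ m))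
    (fun m _ h => Vfun_le_Vfun hN (_root_.zpow_pos two_pos m).le
      (zpow_le_zpow_right₀ one_le_two h))
    (fun _ => min_le_left _ _) (fun m => Vfun_ne_top hN (_root_.zpow_pos two_pos m))
  have hI : μ (⋂ m, A m) = 0 := by
    refine le_antisymm (ge_of_tendsto' ((tendsto_Vfun_atTop (μ := μ) hN).comp
      (tendsto_pow_atTop_atTop_of_one_lt one_lt_two)) fun n : ℕ => ?_) zero_le
    calc μ (⋂ m, A m) ≤ μ (A n) := measure_mono (iInter_subset _ _)
      _ = Vfun μ N (2 ^ n) := by rw [(hAμ n).2, zpow_natCast]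
  obtain ⟨f, hf, htail⟩ := exists_tailFun_eq_of_antitone hA (fun m => (hAμ m).1) hI
  refine ⟨f, hf, fun t ht => ?_, fun t ht => ?_⟩ <;>
    obtain ⟨n, hnt, htn⟩ := exists_mem_Ioc_zpow ht one_lt_two <;>
    rw [htail n t hnt htn, (hAμ _).2]
  · exact Vfun_le_Vfun hN ht.le htn
  · refine Vfun_le_Vfun hN (_root_.zpow_pos two_pos _).le ?_
    rw [zpow_add_one₀ two_ne_zero]
    linarith

end Dyadic

section LowerBound

variable {X : Type*} [MeasurableSpace X] {μ : Measure X} {N : ℝ → ℝ} {f : X → ℝ}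
  {ν : Measure ℝ}

theorem setLIntegral_N_le_lintegral_of_Vfun_two_mul_le (hN : IsYoungOrlicz N)
    (hν : ∀ t : ℝ, 0 < t → ν (Ioi t) = Vfun μ N t) (hf : Measurable f)
    (hlow : ∀ t > 0, Vfun μ N (2 * t) ≤ tailFun μ f t) {k : ℝ} (hk : 0 < k) :
    ∫⁻ t in Ioi 0, ENNReal.ofReal (N ((4 * k)⁻¹ * t)) ∂ν ≤
      ∫⁻ x, ENNReal.ofReal (N (|f x| / k)) ∂μ := by
  rw [setLIntegral_N_mul_eq hN ν (by positivity), lintegral_N_abs_div_eq hN hf hk]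
  refine setLIntegral_mono' measurableSet_Ioi fun s (hs : 0 < s) => ?_
  have ha : 0 < k * Ninv N s := mul_pos hk (hN.Ninv_pos hs)
  calc ν (Ici (Ninv N s / (4 * k)⁻¹)) ≤ ν (Ioi (2 * (k * Ninv N s))) :=
        measure_mono (Ici_subset_Ioi.2 (by rw [div_inv_eq_mul]; linarith))
    _ = Vfun μ N (2 * (k * Ninv N s)) := hν _ (by positivity)
    _ ≤ tailFun μ f (k * Ninv N s) := hlow _ ha

theorem strongNorm_eq_top_of_Vfun_two_mul_le (hN : IsYoungOrlicz N)
    (hν : ∀ t : ℝ, 0 < t → ν (Ioi t) = Vfun μ N t)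
    (hν_top : ∀ C > 0, ∫⁻ t in Ioi 0, ENNReal.ofReal (N (C * t)) ∂ν = ⊤) (hf : Measurable f)
    (hlow : ∀ t > 0, Vfun μ N (2 * t) ≤ tailFun μ f t) : strongNorm μ N f = ⊤ := by
  have hempty : {k : ℝ | 0 < k ∧ ∫⁻ x, ENNReal.ofReal (N (|f x| / k)) ∂μ ≤ 1} = ∅ := by
    refine eq_empty_iff_forall_notMem.2 fun k ⟨hk, hint⟩ => ?_
    have h := (setLIntegral_N_le_lintegral_of_Vfun_two_mul_le hN hν hf hlow hk).trans hint
    rw [hν_top _ (by positivity)] at h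
    exact top_ne_one (le_antisymm h le_top)
  rw [strongNorm, hempty, image_empty, sInf_empty]

theorem not_ae_eq_zero_of_tailFun_pos {t : ℝ} (ht : 0 < t) (hpos : 0 < tailFun μ f t) :
    ¬ f =ᵐ[μ] 0 := by
  intro hf
  refine hpos.ne' (measure_mono_null ?_ (ae_iff.1 hf))
  intro x (hx : t ≤ |f x|) (h0 : f x = 0)
  rw [h0, abs_zero] at hx
  exact hx.not_gt ht

theorem Ynorm_eq_top_of_Vfun_two_mul_le (hN : IsYoungOrlicz N) (hμ : μ ≠ 0)
    (hν : ∀ t : ℝ, 0 < t → ν (Ioi t) = Vfun μ N t)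
    (hν_top : ∀ C > 0, ∫⁻ t in Ioi 0, ENNReal.ofReal (N (C * t)) ∂ν = ⊤) (hf : Measurable f)
    (hup : ∀ t > 0, tailFun μ f t ≤ Vfun μ N t)
    (hlow : ∀ t > 0, Vfun μ N (2 * t) ≤ tailFun μ f t) : Ynorm μ N = ⊤ := by
  have hweak : weakNorm μ N f ≠ ⊤ :=
    ne_top_of_le_ne_top ofReal_ne_top (weakNorm_le_ofReal one_pos (by simpa using hup))
  have hf0 : ¬ f =ᵐ[μ] 0 :=
    not_ae_eq_zero_of_tailFun_pos one_pos ((Vfun_pos hμ _).trans_le (hlow 1 one_pos))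
  refine top_unique (le_trans ?_ (le_iSup₂_of_le f hf (le_iSup₂_of_le hf0 hweak le_rfl)))
  rw [strongNorm_eq_top_of_Vfun_two_mul_le hN hν hν_top hf hlow, ENNReal.top_div_of_ne_top hweak]

end LowerBound

theorem strong_weak_coincidence_iff
    {X : Type*} [MeasurableSpace X] (μ : MeasureTheory.Measure X) [SigmaFinite μ]
    (hμ0 : μ ≠ 0) (hatomless : Atomless μ)
    (N : ℝ → ℝ) (hN : IsYoungOrlicz N)
    (ν : MeasureTheory.Measure ℝ)
    (hν : ∀ t : ℝ, 0 < t → ν (Set.Ioi t) = Vfun μ N t) :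
    Ynorm μ N < ⊤ ↔
      ∃ C : ℝ, 0 < C ∧ ∫⁻ t in Set.Ioi (0:ℝ), ENNReal.ofReal (N (C * t)) ∂ν < ⊤ := by
  refine ⟨fun hY => ?_, fun ⟨C, hC, hνC⟩ => ?_⟩
  · by_contra! hν_top
    obtain ⟨f, hf, hup, hlow⟩ := exists_tailFun_between hatomless hN
    exact hY.ne (Ynorm_eq_top_of_Vfun_two_mul_le hN hμ0 hν
      (fun C hC => top_le_iff.1 (hν_top C hC)) hf hup hlow)
  · obtain ⟨C', hC', hνC'⟩ := exists_lintegral_le_one hN hC hνC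
    exact (Ynorm_le_of_lintegral_le_one hN hν hC' hνC').trans_lt ofReal_lt_top
end

section
/- Let μ be a probability measure (μ(X) = 1), m > 1, and N^{(m)}(u) = exp(|u|^m/m) − 1. Then for every k > 1, Q[N^{(m)}](k) = ∫₂^∞ (x^{k^{-m}} − 1)(x − 1)^{-2} dx = G(k^{-m}) − 1, where G(α) = ∫₀^{1/2} (1 − z)^{-2} z^{-α} dz. -/
open MeasureTheory ENNReal Set Filter Topology

/-!
With `α = k ^ (-m)` the exponential Young function `N` satisfies `N (u / k) = (1 + N u) ^ α - 1`,
and `N (N⁻¹ w) = w`. Since `μ X = 1`, the integral defining `Q[N](k)` runs over `w > 1` and equals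
`∫_{w > 1} ((1 + w) ^ α - 1) w⁻² dw`; the shift `x = w + 1` gives the first formula. The
substitution `x = 1 / z` turns it into `∫_0^{1/2} (1 - z)⁻² (z ^ (-α) - 1) dz`, which is
`G(α) - ∫_0^{1/2} (1 - z)⁻² dz = G(α) - 1`.
-/

open Real

theorem Ninv_eq_of_strictMonoOn {N : ℝ → ℝ} (hN : StrictMonoOn N (Ici 0)) {c w : ℝ}
    (hc : 0 ≤ c) (hNc : N c = w) : Ninv N w = c := by
  refine le_antisymm (csInf_le ⟨0, fun u hu => hu.1⟩ ⟨hc, hNc.ge⟩) ?_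
  refine le_csInf ⟨c, hc, hNc.ge⟩ fun u ⟨hu, hwu⟩ => ?_
  by_contra! hlt
  exact hwu.not_gt ((hN hu hc hlt).trans_eq hNc)

section ExpYoung

variable {m : ℝ}

theorem strictMonoOn_exp_abs_rpow_div_sub_one (hm : 0 < m) :
    StrictMonoOn (fun u : ℝ => exp (|u| ^ m / m) - 1) (Ici 0) := by
  intro u hu v hv huv
  simp only [abs_of_nonneg (mem_Ici.1 hu), abs_of_nonneg (mem_Ici.1 hv)]
  gcongr

theorem exp_abs_mul_log_one_add_rpow_inv_rpow_div (hm : 0 < m) {w : ℝ} (hw : 0 ≤ w) :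
    exp (|(m * Real.log (1 + w)) ^ m⁻¹| ^ m / m) = 1 + w := by
  have hlog : 0 ≤ m * Real.log (1 + w) := mul_nonneg hm.le (log_nonneg (by linarith))
  rw [abs_of_nonneg (rpow_nonneg hlog _), ← rpow_mul hlog, inv_mul_cancel₀ hm.ne', Real.rpow_one,
    mul_div_cancel_left₀ _ hm.ne', exp_log (by linarith : (0:ℝ) < 1 + w)]

theorem Ninv_exp_abs_rpow_div_sub_one (hm : 0 < m) {w : ℝ} (hw : 0 ≤ w) :
    Ninv (fun u : ℝ => exp (|u| ^ m / m) - 1) w = (m * Real.log (1 + w)) ^ m⁻¹ :=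
  Ninv_eq_of_strictMonoOn (strictMonoOn_exp_abs_rpow_div_sub_one hm)
    (rpow_nonneg (mul_nonneg hm.le (log_nonneg (by linarith))) _)
    (by simp only [exp_abs_mul_log_one_add_rpow_inv_rpow_div hm hw, add_sub_cancel_left])

theorem exp_abs_div_rpow_div {k : ℝ} (hk : 0 < k) (u : ℝ) :
    exp (|u / k| ^ m / m) = exp (|u| ^ m / m) ^ k ^ (-m) := by
  rw [← exp_mul, abs_div, abs_of_pos hk, div_rpow (abs_nonneg u) hk.le, rpow_neg hk.le]
  ring_nf

theorem Qfun_exp_abs_rpow_div_sub_one {X : Type*} [MeasurableSpace X] (μ : Measure X)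
    [IsProbabilityMeasure μ] (hm : 0 < m) {k : ℝ} (hk : 0 < k) :
    Qfun μ (fun u : ℝ => exp (|u| ^ m / m) - 1) k =
      ∫⁻ w in Ioi 1, ENNReal.ofReal (((w + 1) ^ k ^ (-m) - 1) * w ^ (-2 : ℝ)) := by
  rw [Qfun, measure_univ, inv_one, toReal_one]
  refine setLIntegral_congr_fun measurableSet_Ioi fun w (hw : 1 < w) => ?_
  rw [Ninv_exp_abs_rpow_div_sub_one hm (by linarith), exp_abs_div_rpow_div hk,
    exp_abs_mul_log_one_add_rpow_inv_rpow_div hm (by linarith), add_comm 1 w, Real.rpow_neg (x := w) (by linarith),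
    Real.rpow_two, div_eq_mul_inv]

end ExpYoung

theorem lintegral_Ioi_comp_add_right (f : ℝ → ℝ≥0∞) (a c : ℝ) :
    ∫⁻ x in Ioi a, f (x + c) = ∫⁻ x in Ioi (a + c), f x := by
  rw [← image_add_const_Ioi, (measurePreserving_add_right volume c).setLIntegral_comp_emb
    (measurableEmbedding_addRight c)]

open scoped Pointwise in
theorem lintegral_Ioi_eq_lintegral_Ioo_inv {a : ℝ} (ha : 0 < a) (f : ℝ → ℝ≥0∞) :
    ∫⁻ x in Ioi a, f x = ∫⁻ z in Ioo 0 a⁻¹, ENNReal.ofReal ((z ^ 2)⁻¹) * f z⁻¹ := by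
  have himage : Inv.inv '' Ioo 0 a⁻¹ = Ioi a := by
    rw [image_inv_eq_inv, inv_Ioo_0_left (inv_pos.2 ha), inv_inv]
  rw [← himage, lintegral_image_eq_lintegral_abs_deriv_mul measurableSet_Ioo
    (fun z hz => (hasDerivAt_inv hz.1.ne').hasDerivWithinAt) inv_injective.injOn]
  refine setLIntegral_congr_fun measurableSet_Ioo fun z _ => ?_
  rw [abs_neg, abs_of_nonneg (by positivity)]

theorem lintegral_Ioo_one_sub_rpow_neg_two :
    ∫⁻ z in Ioo (0 : ℝ) (1 / 2), ENNReal.ofReal ((1 - z) ^ (-2 : ℝ)) = 1 := by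
  have hcont : ContinuousOn (fun z : ℝ => (1 - z) ^ (-2 : ℝ)) (Icc 0 (1 / 2)) :=
    ContinuousOn.rpow_const (by fun_prop) fun z hz => Or.inl (sub_pos.2 (by linarith [hz.2])).ne'
  have hint : IntegrableOn (fun z : ℝ => (1 - z) ^ (-2 : ℝ)) (Ioo 0 (1 / 2)) :=
    hcont.integrableOn_Icc.mono_set Ioo_subset_Icc_self
  have hval : ∫ z in (0 : ℝ)..1 / 2, (1 - z) ^ (-2 : ℝ) = 1 := by
    rw [intervalIntegral.integral_comp_sub_left (fun x => x ^ (-2 : ℝ)),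
      integral_rpow (Or.inr ⟨by norm_num, by norm_num [mem_uIcc]⟩)]
    norm_num
  rw [← ofReal_integral_eq_lintegral_ofReal hint, ← integral_Ioc_eq_integral_Ioo,
    ← intervalIntegral.integral_of_le (by norm_num), hval, ENNReal.ofReal_one]
  filter_upwards [ae_restrict_mem measurableSet_Ioo] with z hz
  exact Real.rpow_nonneg (by linarith [hz.2]) _

theorem inv_sq_mul_inv_rpow_sub_one_mul {z α : ℝ} (hz0 : 0 < z) (hz1 : z < 1) :
    (z ^ 2)⁻¹ * ((z⁻¹ ^ α - 1) * (z⁻¹ - 1) ^ (-2 : ℝ)) = (1 - z) ^ (-2 : ℝ) * (z ^ (-α) - 1) := by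
  have hz1' : 0 < z⁻¹ - 1 := sub_pos.2 (one_lt_inv₀ hz0 |>.2 hz1)
  rw [Real.inv_rpow hz0.le, ← Real.rpow_neg hz0.le, Real.rpow_neg hz1'.le,
    Real.rpow_neg (x := 1 - z) (by linarith), Real.rpow_two, Real.rpow_two]
  field_simp

theorem lintegral_Ioo_one_sub_rpow_neg_two_mul_rpow_neg_sub_one {α : ℝ} (hα : 0 ≤ α) :
    ∫⁻ z in Ioo (0 : ℝ) (1 / 2), ENNReal.ofReal ((1 - z) ^ (-2 : ℝ) * (z ^ (-α) - 1)) =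
      Gfun α - 1 := by
  have hle : ∀ᵐ z ∂volume.restrict (Ioo (0 : ℝ) (1 / 2)),
      ENNReal.ofReal ((1 - z) ^ (-2 : ℝ)) ≤ ENNReal.ofReal ((1 - z) ^ (-2 : ℝ) * z ^ (-α)) := by
    filter_upwards [ae_restrict_mem measurableSet_Ioo] with z hz
    exact ENNReal.ofReal_le_ofReal (le_mul_of_one_le_right
      (Real.rpow_nonneg (by linarith [hz.2]) _)
      (Real.one_le_rpow_of_pos_of_le_one_of_nonpos hz.1 (by linarith [hz.2]) (neg_nonpos.2 hα)))
  rw [Gfun, ← lintegral_Ioo_one_sub_rpow_neg_two, ← lintegral_sub (by fun_prop)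
    (by rw [lintegral_Ioo_one_sub_rpow_neg_two]; exact one_ne_top) hle]
  refine setLIntegral_congr_fun measurableSet_Ioo fun z hz => ?_
  rw [mul_sub_one, ENNReal.ofReal_sub _ (Real.rpow_nonneg (by linarith [hz.2]) _)]

theorem lintegral_Ioi_two_rpow_sub_one_mul_sub_one_rpow_neg_two {α : ℝ} (hα : 0 ≤ α) :
    ∫⁻ x in Ioi (2 : ℝ), ENNReal.ofReal ((x ^ α - 1) * (x - 1) ^ (-2 : ℝ)) = Gfun α - 1 := by
  rw [← lintegral_Ioo_one_sub_rpow_neg_two_mul_rpow_neg_sub_one hα,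
    lintegral_Ioi_eq_lintegral_Ioo_inv two_pos, one_div]
  refine setLIntegral_congr_fun measurableSet_Ioo fun z hz => ?_
  rw [← ENNReal.ofReal_mul (by positivity),
    inv_sq_mul_inv_rpow_sub_one_mul hz.1 (hz.2.trans (by norm_num))]

theorem Qfun_exponential_eq
    {X : Type*} [MeasurableSpace X] (μ : MeasureTheory.Measure X)
    [MeasureTheory.IsProbabilityMeasure μ]
    (m : ℝ) (hm : 1 < m) :
    ∀ k : ℝ, 1 < k →
      Qfun μ (fun u : ℝ => Real.exp (|u| ^ m / m) - 1) k =
        ∫⁻ x in Set.Ioi (2:ℝ),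
          ENNReal.ofReal ((x ^ (k ^ (-m)) - 1) * (x - 1) ^ (-(2:ℝ))) ∧
      Qfun μ (fun u : ℝ => Real.exp (|u| ^ m / m) - 1) k = Gfun (k ^ (-m)) - 1 := by
  intro k hk
  have hQ : Qfun μ (fun u : ℝ => exp (|u| ^ m / m) - 1) k =
      ∫⁻ x in Ioi (2 : ℝ), ENNReal.ofReal ((x ^ k ^ (-m) - 1) * (x - 1) ^ (-2 : ℝ)) := by
    rw [Qfun_exp_abs_rpow_div_sub_one μ (by linarith) (by linarith), ← one_add_one_eq_two,
      ← lintegral_Ioi_comp_add_right]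
    simp only [add_sub_cancel_right]
  exact ⟨hQ, hQ.trans (lintegral_Ioi_two_rpow_sub_one_mul_sub_one_rpow_neg_two
    (Real.rpow_nonneg (by linarith) _))⟩
end

section
/- Let μ be a probability measure, m > 1, and N^{(m)}(u) = exp(|u|^m/m) − 1. Then the exact embedding constant k₀[N^{(m)}] (the unique k ∈ (1, ∞) with Q[N^{(m)}](k) = 1) equals β₀^{-1/m}, where β₀ ∈ (0, 1) is the unique solution of G(β₀) = 2; equivalently, G(k₀[N^{(m)}]^{-m}) = 2. -/
open MeasureTheory ENNReal Set Filter Topology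

/-! For `N = N^{(m)}` one has `N⁻¹(w) = (m log (1 + w))^{1/m}`, hence
`N(N⁻¹(w) / k) = (1 + w)^α - 1` with `α = k^{-m}`, and for a probability measure
`Q[N](k) = ∫₁^∞ ((1 + w)^α - 1) w⁻² dw`. The substitution `z = 1 / (1 + w)` turns `G(α)` into
`∫₁^∞ (1 + w)^α w⁻² dw = Q[N](k) + 1`, so `Q[N](k₀) = 1` means `G(k₀^{-m}) = 2`, and
`k₀^{-m} = β₀` because `G` is strictly increasing wherever it is finite. -/

noncomputable def expOrlicz (m u : ℝ) : ℝ := Real.exp (|u| ^ m / m) - 1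

section expOrlicz

variable {m : ℝ}

lemma le_expOrlicz_iff (hm : 0 < m) {u w : ℝ} (hu : 0 ≤ u) (hw : 0 ≤ w) :
    w ≤ expOrlicz m u ↔ (m * Real.log (1 + w)) ^ m⁻¹ ≤ u := by
  have hlog : 0 ≤ m * Real.log (1 + w) := mul_nonneg hm.le (Real.log_nonneg (by linarith))
  rw [expOrlicz, abs_of_nonneg hu, Real.rpow_inv_le_iff_of_pos hlog hu hm, ← le_div_iff₀' hm,
    le_sub_iff_add_le', ← Real.log_le_iff_le_exp (by linarith)]

lemma Ninv_expOrlicz (hm : 0 < m) {w : ℝ} (hw : 0 ≤ w) :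
    Ninv (expOrlicz m) w = (m * Real.log (1 + w)) ^ m⁻¹ := by
  have hlog : 0 ≤ (m * Real.log (1 + w)) ^ m⁻¹ :=
    Real.rpow_nonneg (mul_nonneg hm.le (Real.log_nonneg (by linarith))) _
  have hset : {u | 0 ≤ u ∧ w ≤ expOrlicz m u} = Ici ((m * Real.log (1 + w)) ^ m⁻¹) := by
    ext u
    simp only [mem_ofPred_eq, mem_Ici]
    constructor
    · rintro ⟨hu, hwu⟩
      exact (le_expOrlicz_iff hm hu hw).1 hwu
    · intro hu
      exact ⟨hlog.trans hu, (le_expOrlicz_iff hm (hlog.trans hu) hw).2 hu⟩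
  rw [Ninv, hset, csInf_Ici]

lemma expOrlicz_Ninv_div (hm : 0 < m) {w k : ℝ} (hw : 0 ≤ w) (hk : 0 < k) :
    expOrlicz m (Ninv (expOrlicz m) w / k) = (1 + w) ^ k ^ (-m) - 1 := by
  have hlog : 0 ≤ m * Real.log (1 + w) := mul_nonneg hm.le (Real.log_nonneg (by linarith))
  rw [Ninv_expOrlicz hm hw, expOrlicz, abs_of_nonneg (by positivity), Real.div_rpow (by positivity)
    hk.le, ← Real.rpow_mul hlog, inv_mul_cancel₀ hm.ne', Real.rpow_one, Real.rpow_neg hk.le,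
    Real.rpow_def_of_pos (x := 1 + w) (by linarith)]
  congr 2
  field_simp

end expOrlicz

lemma Qfun_expOrlicz {X : Type*} [MeasurableSpace X] (μ : Measure X) [IsProbabilityMeasure μ]
    {m k : ℝ} (hm : 0 < m) (hk : 0 < k) :
    Qfun μ (expOrlicz m) k = ∫⁻ w in Ioi 1, ENNReal.ofReal (((1 + w) ^ k ^ (-m) - 1) / w ^ 2) := by
  rw [Qfun, measure_univ, inv_one, toReal_one]
  refine setLIntegral_congr_fun measurableSet_Ioi fun w hw => ?_
  rw [expOrlicz_Ninv_div hm ((zero_lt_one.trans hw).le) hk]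

lemma image_inv_one_add_Ioi_one : (fun w : ℝ => (1 + w)⁻¹) '' Ioi 1 = Ioo 0 (1 / 2) := by
  have : (fun w : ℝ => (1 + w)⁻¹) = (·⁻¹) ∘ (1 + ·) := rfl
  rw [this, image_comp, image_const_add_Ioi, image_inv_eq_inv, inv_Ioi₀ (by norm_num)]
  norm_num

lemma Gfun_eq_lintegral_Ioi (α : ℝ) :
    Gfun α = ∫⁻ w in Ioi 1, ENNReal.ofReal ((1 + w) ^ α / w ^ 2) := by
  have hderiv : ∀ w ∈ Ioi (1 : ℝ),
      HasDerivWithinAt (fun w : ℝ => (1 + w)⁻¹) (-1 / (1 + w) ^ 2) (Ioi 1) w := fun w hw =>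
    (((hasDerivAt_id w).const_add 1).inv
      (by simp only [id]; linarith [mem_Ioi.1 hw])).hasDerivWithinAt
  have hinj : InjOn (fun w : ℝ => (1 + w)⁻¹) (Ioi 1) :=
    (inv_injective.comp (add_right_injective 1)).injOn
  rw [Gfun, ← image_inv_one_add_Ioi_one,
    lintegral_image_eq_lintegral_abs_deriv_mul measurableSet_Ioi hderiv hinj]
  refine setLIntegral_congr_fun measurableSet_Ioi fun w hw => ?_
  have hw : 0 < w := zero_lt_one.trans hw
  have hw' : 0 < 1 + w := by linarith
  have hsub : 1 - (1 + w)⁻¹ = w / (1 + w) := by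
    field_simp
    ring
  rw [← ENNReal.ofReal_mul (abs_nonneg _)]
  congr 1
  rw [Real.inv_rpow hw'.le, Real.rpow_neg (x := 1 + w) hw'.le, inv_inv,
    Real.rpow_neg (by rw [sub_nonneg]; exact inv_le_one_of_one_le₀ (by linarith)),
    Real.rpow_two, abs_div, abs_neg, abs_one,
    abs_of_pos (by positivity), hsub]
  field_simp

lemma lintegral_Ioi_one_one_div_sq : ∫⁻ w in Ioi (1 : ℝ), ENNReal.ofReal (1 / w ^ 2) = 1 := by
  have hpow : EqOn (fun w : ℝ => 1 / w ^ 2) (fun w => w ^ (-2 : ℝ)) (Ioi 1) := fun w hw => by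
    simp only
    rw [Real.rpow_neg (zero_lt_one.trans hw).le, one_div]
    norm_cast
  have hint : IntegrableOn (fun w : ℝ => 1 / w ^ 2) (Ioi 1) :=
    (integrableOn_Ioi_rpow_of_lt (by norm_num) zero_lt_one).congr_fun hpow.symm measurableSet_Ioi
  rw [← ofReal_integral_eq_lintegral_ofReal hint (ae_of_all _ fun w => by positivity),
    setIntegral_congr_fun measurableSet_Ioi hpow, integral_Ioi_rpow_of_lt (by norm_num) zero_lt_one]
  norm_num

lemma Gfun_eq_lintegral_sub_one_add_one {α : ℝ} (hα : 0 ≤ α) :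
    Gfun α = (∫⁻ w in Ioi 1, ENNReal.ofReal (((1 + w) ^ α - 1) / w ^ 2)) + 1 := by
  rw [Gfun_eq_lintegral_Ioi, ← lintegral_Ioi_one_one_div_sq,
    ← lintegral_add_right _ (by fun_prop)]
  refine setLIntegral_congr_fun measurableSet_Ioi fun w hw => ?_
  have hw : 1 ≤ 1 + w := by linarith [mem_Ioi.1 hw]
  rw [← ENNReal.ofReal_add
    (div_nonneg (sub_nonneg.2 (Real.one_le_rpow hw hα)) (sq_nonneg w)) (by positivity)]
  congr 1
  ring

lemma Gfun_strictMonoOn : StrictMonoOn Gfun {α | Gfun α ≠ ∞} := by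
  intro a ha b _ hab
  rw [mem_ofPred_eq, Gfun_eq_lintegral_Ioi] at ha
  rw [Gfun_eq_lintegral_Ioi, Gfun_eq_lintegral_Ioi]
  refine setLIntegral_strict_mono measurableSet_Ioi (by simp) (by fun_prop) ha
    (ae_of_all _ fun w hw => ?_)
  have hw : 1 < w := hw
  rw [ENNReal.ofReal_lt_ofReal_iff (by positivity)]
  exact div_lt_div_of_pos_right (Real.rpow_lt_rpow_of_exponent_lt (by linarith) hab)
    (by positivity)

theorem kZero_exponential_eq_general
    {X : Type*} [MeasurableSpace X] (μ : MeasureTheory.Measure X)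
    [MeasureTheory.IsProbabilityMeasure μ]
    (m : ℝ) (hm : 1 < m)
    (β₀ : ℝ) (hG : Gfun β₀ = 2)
    (k₀ : ℝ) (hk₀ : 1 < k₀)
    (hQ : Qfun μ (fun u : ℝ => Real.exp (|u| ^ m / m) - 1) k₀ = 1) :
    k₀ = β₀ ^ (-(1/m)) ∧ Gfun (k₀ ^ (-m)) = 2 := by
  have hm₀ : 0 < m := by linarith
  have hk₀' : 0 < k₀ := by linarith
  have hQ' : Qfun μ (expOrlicz m) k₀ = 1 := hQ
  have hGk : Gfun (k₀ ^ (-m)) = 2 := by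
    rw [Gfun_eq_lintegral_sub_one_add_one (Real.rpow_nonneg hk₀'.le _),
      ← Qfun_expOrlicz μ hm₀ hk₀', hQ', one_add_one_eq_two]
  have hβ : k₀ ^ (-m) = β₀ :=
    Gfun_strictMonoOn.injOn (by simp [hGk]) (by simp [hG]) (hGk.trans hG.symm)
  refine ⟨?_, hGk⟩
  rw [← hβ, ← Real.rpow_mul hk₀'.le, neg_mul_neg, mul_one_div_cancel hm₀.ne', Real.rpow_one]

theorem kZero_exponential_eq
    {X : Type*} [MeasurableSpace X] (μ : MeasureTheory.Measure X)
    [MeasureTheory.IsProbabilityMeasure μ]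
    (m : ℝ) (hm : 1 < m)
    (β₀ : ℝ) (hβ₀ : β₀ ∈ Set.Ioo (0:ℝ) 1) (hG : Gfun β₀ = 2)
    (k₀ : ℝ) (hk₀ : 1 < k₀)
    (hQ : Qfun μ (fun u : ℝ => Real.exp (|u| ^ m / m) - 1) k₀ = 1) :
    k₀ = β₀ ^ (-(1/m)) ∧ Gfun (k₀ ^ (-m)) = 2 :=
  kZero_exponential_eq_general μ m hm β₀ hG k₀ hk₀ hQ
end

section
/- The function G(α) = ∫₀^{1/2} (1 − z)^{-2} z^{-α} dz satisfies G(α) = 1 + 2 ln 2 · α + o(α) as α → 0⁺, i.e., lim_{α → 0⁺} (G(α) − 1)/α = 2 ln 2. -/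
open MeasureTheory ENNReal Set Filter Topology

/-!
Write `(G(α) - 1) / α = ∫₀^{1/2} (1 - z)⁻² (z^{-α} - 1) / α dz`. For `0 < z < 1` the difference
quotient `(z^{-α} - 1) / α` is nonnegative and, by convexity of `α ↦ z^{-α}`, increasing in `α`;
so for `α < 1/2` it is dominated by `2 (z^{-1/2} - 1)`, which is integrable, and dominated
convergence gives the limit `∫₀^{1/2} (1 - z)⁻² (-log z) dz`. The antiderivative
`-z log z / (1 - z) - log (1 - z)` evaluates this to `2 log 2`.
-/

namespace Real

lemma rpow_neg_sub_one_div_nonneg {z α : ℝ} (hz₀ : 0 < z) (hz₁ : z ≤ 1) (hα : 0 < α) :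
    0 ≤ (z ^ (-α) - 1) / α :=
  div_nonneg (sub_nonneg.2 (one_le_rpow_of_pos_of_le_one_of_nonpos hz₀ hz₁ (by linarith))) hα.le

lemma rpow_neg_sub_one_div_mono {z α β : ℝ} (hz : 0 < z) (hα : 0 < α) (hαβ : α ≤ β) :
    (z ^ (-α) - 1) / α ≤ (z ^ (-β) - 1) / β := by
  have hconv : ConvexOn ℝ univ (fun α : ℝ => z ^ (-α)) := by
    convert convexOn_rpow_left (inv_pos.2 hz) using 2 with α
    rw [inv_rpow hz.le, rpow_neg hz.le]
  simpa using hconv.secant_mono (mem_univ 0) (mem_univ α) (mem_univ β) hα.ne' (by linarith) hαβ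

lemma tendsto_rpow_neg_sub_one_div {z : ℝ} (hz : 0 < z) :
    Tendsto (fun α : ℝ => (z ^ (-α) - 1) / α) (𝓝[>] 0) (𝓝 (-log z)) := by
  have hderiv : HasDerivAt (fun α : ℝ => z ^ (-α)) (-log z) 0 := by
    simpa using (hasDerivAt_neg (0 : ℝ)).const_rpow hz
  refine ((hasDerivAt_iff_tendsto_slope.1 hderiv).mono_left
    (nhdsWithin_mono 0 fun α hα => ne_of_gt hα)).congr fun α => ?_
  simp [slope_def_field]

end Real

theorem setIntegral_Ioo_eq_sub_of_hasDerivAt_of_nonneg {f f' : ℝ → ℝ} {a b : ℝ} (hab : a ≤ b)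
    (hcont : ContinuousOn f (Icc a b)) (hderiv : ∀ x ∈ Ioo a b, HasDerivAt f (f' x) x)
    (hpos : ∀ x ∈ Ioo a b, 0 ≤ f' x) :
    ∫ x in Ioo a b, f' x = f b - f a := by
  rw [← integral_Ioc_eq_integral_Ioo, ← intervalIntegral.integral_of_le hab]
  exact intervalIntegral.integral_eq_sub_of_hasDerivAt_of_le hab hcont hderiv
    ((intervalIntegrable_iff_integrableOn_Ioc_of_le hab).2
      (intervalIntegral.integrableOn_deriv_of_nonneg hcont hderiv hpos))

section BoundedWeight

variable {g : ℝ → ℝ} {b C : ℝ}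

lemma integrableOn_Ioo_mul_rpow (hb : 0 < b)
    (hg : AEStronglyMeasurable g (volume.restrict (Ioo 0 b)))
    (hC : ∀ z ∈ Ioo 0 b, |g z| ≤ C) {s : ℝ} (hs : -1 < s) :
    IntegrableOn (fun z => g z * z ^ s) (Ioo 0 b) :=
  ((intervalIntegral.integrableOn_Ioo_rpow_iff hb).2 hs).bdd_mul hg
    ((ae_restrict_iff' measurableSet_Ioo).2 (Eventually.of_forall hC))

lemma integral_mul_rpow_neg_sub_div (hb : 0 < b)
    (hg : AEStronglyMeasurable g (volume.restrict (Ioo 0 b)))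
    (hC : ∀ z ∈ Ioo 0 b, |g z| ≤ C) {α : ℝ} (hα : α < 1) :
    ((∫ z in Ioo 0 b, g z * z ^ (-α)) - ∫ z in Ioo 0 b, g z) / α =
      ∫ z in Ioo 0 b, g z * ((z ^ (-α) - 1) / α) := by
  have h0 := integrableOn_Ioo_mul_rpow hb hg hC (s := 0) (by norm_num)
  simp only [Real.rpow_zero, mul_one] at h0
  rw [← integral_sub (integrableOn_Ioo_mul_rpow hb hg hC (by linarith)) h0, ← integral_div]
  congr 1 with z
  ring

theorem tendsto_integral_mul_rpow_neg_sub_one_div (hb₀ : 0 < b) (hb₁ : b ≤ 1)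
    (hg : AEStronglyMeasurable g (volume.restrict (Ioo 0 b)))
    (hC : ∀ z ∈ Ioo 0 b, |g z| ≤ C) :
    Tendsto (fun α : ℝ => ∫ z in Ioo 0 b, g z * ((z ^ (-α) - 1) / α)) (𝓝[>] 0)
      (𝓝 (∫ z in Ioo 0 b, g z * -Real.log z)) := by
  have hbound : IntegrableOn (fun z : ℝ => C * ((z ^ (-(1/2 : ℝ)) - 1) / (1/2))) (Ioo 0 b) :=
    ((((intervalIntegral.integrableOn_Ioo_rpow_iff hb₀).2 (by norm_num)).sub
      (integrableOn_const measure_Ioo_lt_top.ne)).div_const _).const_mul C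
  have hsmall : Ioo (0 : ℝ) (1/2) ∈ 𝓝[>] 0 := Ioo_mem_nhdsGT (by norm_num)
  refine tendsto_integral_filter_of_dominated_convergence _ ?_ ?_ hbound ?_
  · filter_upwards with α
    refine hg.mul (Measurable.aestronglyMeasurable ?_)
    fun_prop
  · filter_upwards [hsmall] with α hα
    filter_upwards [ae_restrict_mem measurableSet_Ioo] with z hz
    have hz₁ : z ≤ 1 := hz.2.le.trans hb₁
    rw [norm_mul, Real.norm_eq_abs, Real.norm_of_nonneg
      (Real.rpow_neg_sub_one_div_nonneg hz.1 hz₁ hα.1)]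
    exact mul_le_mul (hC z hz) (Real.rpow_neg_sub_one_div_mono hz.1 hα.1 hα.2.le)
      (Real.rpow_neg_sub_one_div_nonneg hz.1 hz₁ hα.1) ((abs_nonneg _).trans (hC z hz))
  · filter_upwards [ae_restrict_mem measurableSet_Ioo] with z hz
    exact (Real.tendsto_rpow_neg_sub_one_div hz.1).const_mul (g z)

end BoundedWeight


section OneSubRpowNegTwo

variable {b : ℝ}

lemma one_sub_rpow_neg_two_eq {z : ℝ} (hz : z < 1) : (1 - z) ^ (-(2 : ℝ)) = ((1 - z) ^ 2)⁻¹ := by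
  rw [Real.rpow_neg (by linarith), Real.rpow_two]

lemma abs_one_sub_rpow_neg_two_le {z : ℝ} (hz : z ∈ Ioo (0 : ℝ) (1/2)) :
    |(1 - z) ^ (-(2 : ℝ))| ≤ 4 := by
  rw [one_sub_rpow_neg_two_eq (by linarith [hz.2]), abs_inv, abs_pow,
    abs_of_pos (by linarith [hz.2]), inv_le_comm₀ (by nlinarith [hz.2]) (by norm_num)]
  nlinarith [hz.2]

lemma integral_one_sub_rpow_neg_two (hb₀ : 0 ≤ b) (hb₁ : b < 1) :
    ∫ z in Ioo 0 b, (1 - z) ^ (-(2 : ℝ)) = b / (1 - b) := by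
  have hpos : ∀ z ∈ Icc 0 b, 0 < 1 - z := fun z hz => by linarith [hz.2]
  have h := setIntegral_Ioo_eq_sub_of_hasDerivAt_of_nonneg (f := fun z => z / (1 - z))
    (f' := fun z => (1 - z) ^ (-(2 : ℝ))) hb₀
    (continuousOn_id.div (by fun_prop) fun z hz => (hpos z hz).ne')
    (fun z hz => ?_) (fun z hz => (Real.rpow_pos_of_pos (hpos z (Ioo_subset_Icc_self hz)) _).le)
  · simpa using h
  · have h1 := hpos z (Ioo_subset_Icc_self hz)
    refine ((hasDerivAt_id z).div ((hasDerivAt_id z).const_sub 1) h1.ne').congr_deriv ?_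
    rw [one_sub_rpow_neg_two_eq (by linarith)]
    simp only [id_eq]
    field_simp
    ring

lemma integral_one_sub_rpow_neg_two_mul_neg_log (hb₀ : 0 ≤ b) (hb₁ : b < 1) :
    ∫ z in Ioo 0 b, (1 - z) ^ (-(2 : ℝ)) * -Real.log z =
      -(b * Real.log b) / (1 - b) - Real.log (1 - b) := by
  have hpos : ∀ z ∈ Icc 0 b, 0 < 1 - z := fun z hz => by linarith [hz.2]
  have h := setIntegral_Ioo_eq_sub_of_hasDerivAt_of_nonneg
    (f := fun z => -(z * Real.log z) / (1 - z) - Real.log (1 - z))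
    (f' := fun z => (1 - z) ^ (-(2 : ℝ)) * -Real.log z) hb₀
    ((Real.continuous_mul_log.neg.continuousOn.div (by fun_prop) fun z hz => (hpos z hz).ne').sub
      (Real.continuousOn_log.comp (by fun_prop) fun z hz => (hpos z hz).ne'))
    (fun z hz => ?_) (fun z hz => mul_nonneg
      (Real.rpow_pos_of_pos (hpos z (Ioo_subset_Icc_self hz)) _).le
      (neg_nonneg.2 (Real.log_nonpos hz.1.le (by linarith [hz.2]))))
  · simpa using h
  · have h1 := hpos z (Ioo_subset_Icc_self hz)
    have hsub : HasDerivAt (fun z : ℝ => 1 - z) (-1) z := (hasDerivAt_id z).const_sub 1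
    refine (((Real.hasDerivAt_mul_log hz.1.ne').neg.div hsub h1.ne').sub
      (hsub.log h1.ne')).congr_deriv ?_
    rw [one_sub_rpow_neg_two_eq (by linarith), Pi.neg_apply]
    field_simp
    ring

end OneSubRpowNegTwo

lemma Gfun_toReal (α : ℝ) :
    (Gfun α).toReal = ∫ z in Ioo (0 : ℝ) (1/2), (1 - z) ^ (-(2 : ℝ)) * z ^ (-α) := by
  rw [Gfun, integral_eq_lintegral_of_nonneg_ae]
  · filter_upwards [ae_restrict_mem measurableSet_Ioo] with z hz
    exact mul_nonneg (Real.rpow_pos_of_pos (by linarith [hz.2]) _).le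
      (Real.rpow_pos_of_pos hz.1 _).le
  · exact Measurable.aestronglyMeasurable (by fun_prop)

theorem Gfun_asymptotic_zero :
    Filter.Tendsto (fun α : ℝ => ((Gfun α).toReal - 1) / α)
      (nhdsWithin 0 (Set.Ioi 0)) (nhds (2 * Real.log 2)) := by
  have hg : AEStronglyMeasurable (fun z : ℝ => (1 - z) ^ (-(2 : ℝ)))
      (volume.restrict (Ioo 0 (1/2))) := Measurable.aestronglyMeasurable (by fun_prop)
  have hC : ∀ z ∈ Ioo (0 : ℝ) (1/2), |(1 - z) ^ (-(2 : ℝ))| ≤ 4 :=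
    fun z hz => abs_one_sub_rpow_neg_two_le hz
  have hone : ∫ z in Ioo (0 : ℝ) (1/2), (1 - z) ^ (-(2 : ℝ)) = 1 := by
    rw [integral_one_sub_rpow_neg_two (by norm_num) (by norm_num)]
    norm_num
  have hlog : ∫ z in Ioo (0 : ℝ) (1/2), (1 - z) ^ (-(2 : ℝ)) * -Real.log z = 2 * Real.log 2 := by
    rw [integral_one_sub_rpow_neg_two_mul_neg_log (by norm_num) (by norm_num)]
    rw [show (1 : ℝ) - 1/2 = 2⁻¹ by norm_num, one_div, Real.log_inv]
    ring
  rw [← hlog]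
  refine (tendsto_integral_mul_rpow_neg_sub_one_div (by norm_num) (by norm_num) hg hC).congr' ?_
  filter_upwards [Ioo_mem_nhdsGT one_pos] with α hα
  rw [Gfun_toReal, ← integral_mul_rpow_neg_sub_div (by norm_num) hg hC hα.2, hone]
end
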